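/- arXiv:1202.6672 — 2 statements merged into one kernel-verified Lean document; each statement's English description precedes it below -/
import Mathlib

section
/- In the unit ball model of H²_ℍ, for the triple x₁ = (0,−1), x₂ = (0,1), x₃ = (z', z₂) on the boundary (so |z'|² + |z₂|² = 1), with lifts (0,−1,1), (0,1,1), (z',z₂,1) in ℍ^{2,1}, the triple Hermitian product equals ⟨x̃₁,x̃₂⟩⟨x̃₂,x̃₃⟩⟨x̃₃,x̃₁⟩ = 2(z̄₂ − 1)(1 + z₂), and hence, when |z₂| < 1, |tan 𝔸_ℍ(x)| = |2 Im z₂| / (1 − |z₂|²). -/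
open Quaternion

/-- The quaternionic Hermitian form `⟨Z,W⟩ = z₁w̄₁ + z₂w̄₂ − z₃w̄₃` of signature
`(2,1)` on `ℍ³`. -/
noncomputable def hermQ (Z W : Fin 3 → ℍ[ℝ]) : ℍ[ℝ] :=
  Z 0 * star (W 0) + Z 1 * star (W 1) - Z 2 * star (W 2)

/-- The angle in `[0, π/2]` between the real axis `ℝ ⊂ ℍ` and a quaternion `q`;
for a triple of boundary points this is the quaternionic Cartan angular
invariant `𝔸_ℍ`. -/
noncomputable def angleToRealAxis (q : ℍ[ℝ]) : ℝ := Real.arccos (|q.re| / ‖q‖)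

lemma two_re' : (2:ℍ[ℝ]).re = 2 := rfl
lemma two_imI' : (2:ℍ[ℝ]).imI = 0 := rfl
lemma two_imJ' : (2:ℍ[ℝ]).imJ = 0 := rfl
lemma two_imK' : (2:ℍ[ℝ]).imK = 0 := rfl

lemma norm_sq_eq_normSq' (q : ℍ[ℝ]) : ‖q‖ ^ 2 = Quaternion.normSq q := by
  rw [sq, ← Quaternion.normSq_eq_norm_mul_self]

lemma re_sq_le_normSq (q : ℍ[ℝ]) : q.re ^ 2 ≤ Quaternion.normSq q := by
  rw [Quaternion.normSq_def']; nlinarith [sq_nonneg q.imI, sq_nonneg q.imJ, sq_nonneg q.imK]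

lemma abs_tan_angle (q : ℍ[ℝ]) (hre : q.re ≠ 0) :
    |Real.tan (angleToRealAxis q)| =
      Real.sqrt (Quaternion.normSq q - q.re ^ 2) / |q.re| := by
  have hq : q ≠ 0 := fun h => hre (by simp [h])
  have hn : (0:ℝ) < ‖q‖ := norm_pos_iff.mpr hq
  have hr : (0:ℝ) < |q.re| := abs_pos.mpr hre
  have h1 : 1 - (|q.re| / ‖q‖) ^ 2 = (Quaternion.normSq q - q.re ^ 2) / ‖q‖ ^ 2 := by
    have h0 : (0:ℝ) < Quaternion.normSq q := by rw [← norm_sq_eq_normSq']; positivity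
    rw [div_pow, sq_abs, norm_sq_eq_normSq']
    field_simp
  have hsub : (0:ℝ) ≤ Quaternion.normSq q - q.re ^ 2 := sub_nonneg.mpr (re_sq_le_normSq q)
  rw [angleToRealAxis, Real.tan_arccos, h1,
    Real.sqrt_div hsub, Real.sqrt_sq hn.le]
  rw [abs_of_nonneg (by positivity)]
  field_simp

/-- In the unit ball model of `H²_ℍ`, for the boundary triple `x₁ = (0,−1)`,
`x₂ = (0,1)`, `x₃ = (z', z₂)` with lifts `(0,−1,1)`, `(0,1,1)`, `(z',z₂,1)` in
`ℍ^{2,1}`, the triple Hermitian product equals `2(z̄₂ − 1)(1 + z₂)`, and hence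
`|tan 𝔸_ℍ(x)| = |2 Im z₂| / (1 − |z₂|²)` when `|z₂| < 1`. -/
theorem triple_product_unit_ball (z' z₂ : ℍ[ℝ])
    (hb : Quaternion.normSq z' + Quaternion.normSq z₂ = 1)
    (x₁ x₂ x₃ : Fin 3 → ℍ[ℝ])
    (hx₁ : x₁ = ![0, -1, 1]) (hx₂ : x₂ = ![0, 1, 1]) (hx₃ : x₃ = ![z', z₂, 1]) :
    hermQ x₁ x₂ * hermQ x₂ x₃ * hermQ x₃ x₁ = 2 * (star z₂ - 1) * (1 + z₂) ∧
    (Quaternion.normSq z₂ < 1 →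
      |Real.tan (angleToRealAxis (hermQ x₁ x₂ * hermQ x₂ x₃ * hermQ x₃ x₁))| =
        ‖z₂ - star z₂‖ / (1 - Quaternion.normSq z₂)) := by
  subst hx₁ hx₂ hx₃
  have hprod : hermQ ![0, -1, 1] ![0, 1, 1] * hermQ ![0, 1, 1] ![z', z₂, 1] *
      hermQ ![z', z₂, 1] ![0, -1, 1] = 2 * (star z₂ - 1) * (1 + z₂) := by
    simp [hermQ]
    noncomm_ring
  refine ⟨hprod, fun hlt => ?_⟩
  rw [hprod]
  set q : ℍ[ℝ] := 2 * (star z₂ - 1) * (1 + z₂) with hqdef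
  set n : ℝ := Quaternion.normSq z₂ with hn
  have hre : q.re = 2 * (n - 1) := by
    rw [hqdef, hn]
    simp [Quaternion.re_mul, Quaternion.normSq_def', two_re', two_imI', two_imJ', two_imK']
    ring
  have hrene : q.re ≠ 0 := by rw [hre]; nlinarith
  set s : ℝ := z₂.imI ^ 2 + z₂.imJ ^ 2 + z₂.imK ^ 2 with hs
  have hs0 : (0:ℝ) ≤ s := by positivity
  have hsq : Quaternion.normSq q - q.re ^ 2 = 16 * s := by
    rw [Quaternion.normSq_def', hre]
    have h1 : q.imI = -4 * z₂.imI := by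
      rw [hqdef]
      simp [Quaternion.re_mul, Quaternion.imI_mul, two_re', two_imI', two_imJ', two_imK']
      ring
    have h2 : q.imJ = -4 * z₂.imJ := by
      rw [hqdef]
      simp [Quaternion.re_mul, Quaternion.imJ_mul, two_re', two_imI', two_imJ', two_imK']
      ring
    have h3 : q.imK = -4 * z₂.imK := by
      rw [hqdef]
      simp [Quaternion.re_mul, Quaternion.imK_mul, two_re', two_imI', two_imJ', two_imK']
      ring
    rw [h1, h2, h3, hs]
    ring
  have hrhs : ‖z₂ - star z₂‖ = 2 * Real.sqrt s := by
    have : Quaternion.normSq (z₂ - star z₂) = 2 ^ 2 * s := by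
      rw [Quaternion.normSq_def', hs]
      simp
      ring
    rw [← Real.sqrt_sq (norm_nonneg (z₂ - star z₂)), norm_sq_eq_normSq', this,
      Real.sqrt_mul (by positivity), Real.sqrt_sq (by norm_num)]
  rw [abs_tan_angle q hrene, hsq, hre, hrhs]
  rw [show (16:ℝ) * s = 4 ^ 2 * s from by ring,
    Real.sqrt_mul (by positivity), Real.sqrt_sq (by norm_num : (0:ℝ) ≤ 4)]
  rw [abs_of_nonpos (by nlinarith : 2 * (n - 1) ≤ 0)]
  have h1n : (0:ℝ) < 1 - n := by linarith
  rw [show -(2 * (n - 1)) = 2 * (1 - n) from by ring]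
  rw [div_eq_div_iff (by positivity) h1n.ne']
  ring
end

section
/- The map I: (z,t) ↦ (−2z/(|z|² + t̄), 4t̄/(|z|⁴ + |t|²)) on the Heisenberg group ℍ × Im ℍ minus the origin is an involution: I(I(z,t)) = (z,t) for all (z,t) ≠ (0,0). -/
/-!
With `w = |z|² + t̄`, pure imaginarity of `t` gives `|w|² = |z|⁴ + |t|² =: c`, so
`w⁻¹ = w̄ / c` and `I(z,t) = (−2 w̄ z / c, 4 t̄ / c)`. For the image point `(z', t')` one finds
`|z'|² = 4|z|² / c` and `t̄' = 4t / c`, hence its `w' = (4/c) w̄` and `c' = 16 / c`. Applying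
the formula a second time, `w w̄ = c` and all the real scalars cancel.
-/

open Quaternion

noncomputable def Imap (p : ℍ[ℝ] × ℍ[ℝ]) : ℍ[ℝ] × ℍ[ℝ] :=
  (-2 * (((Quaternion.normSq p.1 : ℝ) : ℍ[ℝ]) + star p.2)⁻¹ * p.1,
   4 * star p.2 * (((Quaternion.normSq p.1 ^ 2 + Quaternion.normSq p.2 : ℝ) : ℍ[ℝ]))⁻¹)

namespace Quaternion

variable {R : Type*}

theorem normSq_coe_add_of_re_eq_zero [CommRing R] (r : R) {t : ℍ[R]} (ht : t.re = 0) :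
    normSq ((r : ℍ[R]) + t) = r ^ 2 + normSq t := by
  rw [normSq_add, normSq_coe, coe_mul_eq_smul, re_smul, re_star, ht, smul_zero, mul_zero,
    add_zero]

theorem sq_normSq_add_normSq_ne_zero [CommRing R] [LinearOrder R] [IsStrictOrderedRing R]
    {z t : ℍ[R]} (h : ¬(z = 0 ∧ t = 0)) : normSq z ^ 2 + normSq t ≠ 0 := by
  rw [Ne, add_eq_zero_iff_of_nonneg (sq_nonneg _) normSq_nonneg, pow_eq_zero_iff two_ne_zero,
    normSq_eq_zero, normSq_eq_zero]
  exact h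

end Quaternion

def gaugeQuat {R : Type*} [CommRing R] (z t : ℍ[R]) : ℍ[R] := ((normSq z : R) : ℍ[R]) + star t

section gaugeQuat

variable {R : Type*} [CommRing R] {z t : ℍ[R]}

theorem normSq_gaugeQuat (ht : t.re = 0) :
    normSq (gaugeQuat z t) = normSq z ^ 2 + normSq t := by
  rw [gaugeQuat, normSq_coe_add_of_re_eq_zero _ (by rwa [re_star]), normSq_star]

theorem star_gaugeQuat : star (gaugeQuat z t) = ((normSq z : R) : ℍ[R]) + t := by
  rw [gaugeQuat, star_add, star_coe, star_star]

end gaugeQuat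

theorem Imap_eq {z t : ℍ[ℝ]} (ht : t.re = 0) :
    Imap (z, t) = ((-2 / (normSq z ^ 2 + normSq t)) • (star (gaugeQuat z t) * z),
      (4 / (normSq z ^ 2 + normSq t)) • star t) := by
  have h2 : (-2 : ℍ[ℝ]) = ((-2 : ℝ) : ℍ[ℝ]) := by norm_cast
  have h4 : (4 : ℍ[ℝ]) = ((4 : ℝ) : ℍ[ℝ]) := by norm_cast
  dsimp only [Imap]
  rw [← gaugeQuat, inv_def, normSq_gaugeQuat ht, h2, h4, ← coe_inv, mul_assoc ((4 : ℝ) : ℍ[ℝ]),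
    ← coe_commutes]
  simp only [coe_mul_eq_smul, smul_smul, smul_mul_assoc, div_eq_mul_inv]

/-- The map `I : (z,t) ↦ (−2z/(|z|² + t̄), 4t̄/(|z|⁴ + |t|²))` is an involution on
the Heisenberg group minus the origin: `I(I(z,t)) = (z,t)` whenever `t` is purely
imaginary and `(z,t) ≠ (0,0)`. -/
theorem Imap_involutive (z t : ℍ[ℝ]) (ht : star t = -t) (h : ¬(z = 0 ∧ t = 0)) :
    Imap (Imap (z, t)) = (z, t) := by
  have hre : t.re = 0 := star_eq_neg.1 ht
  rw [Imap_eq hre]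
  set c := normSq z ^ 2 + normSq t
  have hc : c ≠ 0 := sq_normSq_add_normSq_ne_zero h
  set w := gaugeQuat z t
  have hw : w * star w = (c : ℍ[ℝ]) := by rw [self_mul_star, normSq_gaugeQuat hre]
  have hn' : normSq ((-2 / c) • (star w * z)) = 4 / c * normSq z := by
    rw [normSq_smul, map_mul, normSq_star, normSq_gaugeQuat hre]; field_simp; ring
  have hre' : ((4 / c) • star t).re = 0 := by rw [re_smul, re_star, hre, smul_zero]
  have hgauge' : gaugeQuat ((-2 / c) • (star w * z)) ((4 / c) • star t) = (4 / c) • star w := by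
    rw [gaugeQuat, hn', Quaternion.star_smul, star_star, star_gaugeQuat, coe_mul,
      coe_mul_eq_smul, smul_add]
  have hc' : normSq ((-2 / c) • (star w * z)) ^ 2 + normSq ((4 / c) • star t) = 16 / c := by
    rw [hn', normSq_smul, normSq_star]; field_simp; ring
  rw [Imap_eq hre', hgauge', hc', Quaternion.star_smul, Quaternion.star_smul, star_star,
    star_star, smul_mul_smul_comm, ← mul_assoc, hw, coe_mul_eq_smul, smul_smul, smul_smul,
    smul_smul]
  congr 1 <;> convert one_smul ℝ _ using 2 <;> field_simp <;> ring
end
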